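/- Fix an integer l ≥ 3, let r ∈ ℂ with r ≠ 0, r² ≠ 1 and r + r⁻¹ ≠ 0, and set γ := (r + r⁻¹)^{−2}. Then for every n ≥ l with n + 1 ≢ 0 (mod l), setting j := (n+1) mod l, one has λ_n = ([n+1]_r + [n+1−2j]_r)/(r + r⁻¹)^n. -/

import Mathlib

/-!
Multiplying `λ_m` by `(r + r⁻¹)^m` removes `γ` from the four recurrences, leaving a single
recurrence with coefficients depending only on `m mod l`; together with `λ_m = 0` for `m < 0`
and `λ_0 = λ_1 = 1` it determines the sequence. The closed form satisfies the same recurrence,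
because in each residue class the step reduces to one or two instances of the Chebyshev
recurrence `[k+1]_r = (r + r⁻¹)[k]_r - [k-1]_r`.
-/

noncomputable def qint (r : ℂ) (m : ℤ) : ℂ := (r ^ m - r ^ (-m)) / (r - r⁻¹)

section QuantumInteger

variable {r : ℂ}

lemma qint_zero : qint r 0 = 0 := by simp [qint]

lemma qint_one (h : r - r⁻¹ ≠ 0) : qint r 1 = 1 := by simp [qint, h]

lemma qint_add_one (hr : r ≠ 0) (m : ℤ) :
    qint r (m + 1) = (r + r⁻¹) * qint r m - qint r (m - 1) := by
  simp only [qint, neg_add, neg_sub, zpow_add₀ hr, zpow_sub₀ hr, zpow_neg, zpow_one]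
  ring

lemma qint_two (hr : r ≠ 0) (h : r - r⁻¹ ≠ 0) : qint r 2 = r + r⁻¹ := by
  simpa [qint_zero, qint_one h] using qint_add_one hr 1

end QuantumInteger

def lowCoeff (l : ℕ) (m : ℤ) : ℂ := if m % l = 0 then 0 else if m % l = 1 then 2 else 1

def wrapCoeff (l : ℕ) (m : ℤ) : ℂ := if m % l = l - 1 then 1 else 0

def RecurrenceAt (l : ℕ) (a b c : ℂ) (x : ℤ → ℂ) (m : ℤ) : Prop :=
  x m = a * x (m - 1) - lowCoeff l m * b * x (m - 2) - wrapCoeff l m * c * x (m - 2 * l)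

/-- The four recurrences for `λ` in one formula: `λ` satisfies `Recurrence l 1 γ (γ ^ l)`,
and `m ↦ (r + r⁻¹)^m λ_m` satisfies `Recurrence l (r + r⁻¹) 1 1`. -/
def Recurrence (l : ℕ) (a b c : ℂ) (x : ℤ → ℂ) : Prop :=
  ∀ m : ℤ, 2 ≤ m → RecurrenceAt l a b c x m

lemma recurrence_of_cases {l : ℕ} (hl : 3 ≤ l) {γ : ℂ} {lam : ℤ → ℂ}
    (hrec0 : ∀ m : ℕ, 2 ≤ m → m % l = 0 → lam (m : ℤ) = lam ((m : ℤ) - 1))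
    (hrec1 : ∀ m : ℕ, 2 ≤ m → m % l = 1 →
      lam (m : ℤ) = lam ((m : ℤ) - 1) - 2 * γ * lam ((m : ℤ) - 2))
    (hrecl : ∀ m : ℕ, 2 ≤ m → m % l = l - 1 →
      lam (m : ℤ) =
        lam ((m : ℤ) - 1) - γ * lam ((m : ℤ) - 2) - γ ^ l * lam ((m : ℤ) - 2 * l))
    (hrece : ∀ m : ℕ, 2 ≤ m → m % l ≠ 0 → m % l ≠ 1 → m % l ≠ l - 1 →
      lam (m : ℤ) = lam ((m : ℤ) - 1) - γ * lam ((m : ℤ) - 2)) :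
    Recurrence l 1 γ (γ ^ l) lam := by
  intro m hm
  obtain ⟨k, rfl⟩ := Int.eq_ofNat_of_zero_le (by omega : 0 ≤ m)
  rw [RecurrenceAt]
  have hk : 2 ≤ k := by omega
  have hres : (k : ℤ) % l = ((k % l : ℕ) : ℤ) := (Int.natCast_mod k l).symm
  have hlt : k % l < l := Nat.mod_lt _ (by omega)
  simp only [lowCoeff, wrapCoeff, hres, one_mul]
  by_cases h0 : k % l = 0
  · rw [hrec0 k hk h0, h0, if_pos (by omega), if_neg (by omega)]
    ring
  by_cases h1 : k % l = 1
  · rw [hrec1 k hk h1, h1, if_neg (by omega), if_pos (by omega), if_neg (by omega)]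
    ring
  by_cases hw : k % l = l - 1
  · rw [hrecl k hk hw, if_neg (by omega), if_neg (by omega), if_pos (by omega)]
    ring
  · rw [hrece k hk h0 h1 hw, if_neg (by omega), if_neg (by omega), if_neg (by omega)]
    ring

lemma Recurrence.scale {l : ℕ} {Q γ : ℂ} (hQ : Q ≠ 0) (hγ : γ = (Q ^ 2)⁻¹)
    {x : ℤ → ℂ} (hx : Recurrence l 1 γ (γ ^ l) x) :
    Recurrence l Q 1 1 (fun m ↦ Q ^ m * x m) := by
  intro m hm
  have e1 : Q ^ m = Q * Q ^ (m - 1) := by rw [← zpow_one_add₀ hQ]; ring_nf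
  have e2 : Q ^ m * γ = Q ^ (m - 2) := by
    rw [hγ, ← zpow_natCast, ← zpow_neg, ← zpow_add₀ hQ]; ring_nf
  have e3 : Q ^ m * γ ^ l = Q ^ (m - 2 * l) := by
    rw [hγ, inv_pow, ← pow_mul, ← zpow_natCast, ← zpow_neg, ← zpow_add₀ hQ]
    push_cast
    ring_nf
  rw [RecurrenceAt, hx m hm]
  linear_combination x (m - 1) * e1 - lowCoeff l m * x (m - 2) * e2 -
    wrapCoeff l m * x (m - 2 * l) * e3

lemma Recurrence.unique {l : ℕ} (hl : 0 < l) {a b c : ℂ} {x y : ℤ → ℂ}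
    (hx : Recurrence l a b c x) (hy : Recurrence l a b c y)
    (hxneg : ∀ m < 0, x m = 0) (hyneg : ∀ m < 0, y m = 0) (h0 : x 0 = y 0) (h1 : x 1 = y 1) :
    x = y := by
  suffices h : ∀ n : ℕ, ∀ m : ℤ, m < n → x m = y m from
    funext fun m ↦ h (m.toNat + 1) m (by omega)
  intro n
  induction n with
  | zero => intro m hm; rw [hxneg m hm, hyneg m hm]
  | succ n ih =>
    intro m hm
    by_cases hmn : m < n
    · exact ih m hmn
    obtain rfl | rfl | hm2 : m = 0 ∨ m = 1 ∨ 2 ≤ m := by omega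
    · exact h0
    · exact h1
    · rw [hx m hm2, hy m hm2, ih (m - 1) (by omega), ih (m - 2) (by omega),
        ih (m - 2 * l) (by omega)]

lemma emod_eq_of_eq_mul_add {b m q s : ℤ} (hs : 0 ≤ s) (hsb : s < b) (hm : m = b * q + s) :
    m % b = s :=
  ((Int.ediv_emod_unique (q := q) (by omega)).2 ⟨by omega, hs, hsb⟩).2

/-- The candidate for `(r + r⁻¹)^m λ_m`: writing `m + 1 = l q + j` with `0 ≤ j < l`, it is
`[m+1]_r` if `q = 0` or `j = 0`, and `[m+1]_r + [m+1-2j]_r` otherwise. -/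
noncomputable def closedForm (r : ℂ) (l : ℕ) (m : ℤ) : ℂ :=
  if m < 0 then 0
  else if (m + 1) / l = 0 ∨ (m + 1) % l = 0 then qint r (m + 1)
  else qint r (m + 1) + qint r (m + 1 - 2 * ((m + 1) % l))

section ClosedForm

variable {r : ℂ} {l : ℕ}

lemma closedForm_of_neg {m : ℤ} (hm : m < 0) : closedForm r l m = 0 := if_pos hm

lemma closedForm_eq {q j m : ℤ} (hq : 0 ≤ q) (hj : 0 ≤ j) (hjl : j < l)
    (hm : m = l * q + j - 1) :
    closedForm r l m =
      if q = 0 ∨ j = 0 then qint r (l * q + j) else qint r (l * q + j) + qint r (l * q - j) := by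
  obtain ⟨hdiv, hmod⟩ :=
    (Int.ediv_emod_unique (a := l * q + j) (q := q) (by omega)).2 ⟨add_comm _ _, hj, hjl⟩
  have hm1 : m + 1 = l * q + j := by omega
  by_cases hneg : m < 0
  · have hq0 : q = 0 := by nlinarith
    have hj0 : j = 0 := by subst hq0; omega
    simp [closedForm_of_neg hneg, hq0, hj0, qint_zero]
  · simp only [closedForm, if_neg hneg, hdiv, hmod, hm1]
    rw [show (l : ℤ) * q + j - 2 * j = l * q - j by ring]

lemma closedForm_of_lt {j m : ℤ} (hj : 0 ≤ j) (hjl : j < l) (hm : m = j - 1) :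
    closedForm r l m = qint r j := by
  simp [closedForm_eq le_rfl hj hjl (q := 0) (by simpa using hm)]

lemma closedForm_of_dvd {q m : ℤ} (hl : 0 < l) (hq : 0 ≤ q) (hm : m = l * q - 1) :
    closedForm r l m = qint r (l * q) := by
  simp [closedForm_eq (l := l) (q := q) (j := 0) hq le_rfl (by omega) (by simpa using hm)]

lemma closedForm_of_pos {q j m : ℤ} (hq : 0 < q) (hj : 0 < j) (hjl : j < l)
    (hm : m = l * q + j - 1) :
    closedForm r l m = qint r (l * q + j) + qint r (l * q - j) := by
  rw [closedForm_eq hq.le hj.le hjl hm, if_neg (by omega)]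

lemma closedForm_recurrenceAt_of_dvd (hl : 3 ≤ l) (hr : r ≠ 0) {q m : ℤ} (hq : 0 < q)
    (hm : m = l * q - 1) : RecurrenceAt l (r + r⁻¹) 1 1 (closedForm r l) m := by
  have hres : m % l = l - 1 := emod_eq_of_eq_mul_add (q := q - 1) (by omega) (by omega)
    (by rw [hm]; ring)
  rw [RecurrenceAt, lowCoeff, wrapCoeff, hres, if_neg (by omega), if_neg (by omega),
    if_pos rfl, closedForm_of_dvd (by omega) hq.le hm]
  obtain rfl | hq2 : q = 1 ∨ 2 ≤ q := by omega
  · rw [closedForm_of_lt (j := l - 1) (by omega) (by omega) (by rw [hm]; ring),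
      closedForm_of_lt (j := l - 2) (by omega) (by omega) (by rw [hm]; ring),
      closedForm_of_neg (by omega)]
    linear_combination (norm := ring_nf) qint_add_one hr (l - 1)
  · rw [closedForm_of_pos (q := q - 1) (j := l - 1) (by omega) (by omega) (by omega)
        (by rw [hm]; ring),
      closedForm_of_pos (q := q - 1) (j := l - 2) (by omega) (by omega) (by omega)
        (by rw [hm]; ring),
      closedForm_of_dvd (q := q - 2) (by omega) (by omega) (by rw [hm]; ring)]
    linear_combination (norm := ring_nf)
      qint_add_one hr (l * q - 1) + qint_add_one hr (l * q - 2 * l + 1)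

lemma closedForm_recurrenceAt_of_not_dvd (hl : 3 ≤ l) (hr : r ≠ 0) {q j m : ℤ} (hq : 0 ≤ q)
    (hj : 0 < j) (hjl : j < l) (hm : m = l * q + j - 1) (hm2 : 2 ≤ m) :
    RecurrenceAt l (r + r⁻¹) 1 1 (closedForm r l) m := by
  have hres : m % l = j - 1 := emod_eq_of_eq_mul_add (q := q) (by omega) (by omega) (by omega)
  rw [RecurrenceAt, lowCoeff, wrapCoeff, hres]
  obtain rfl | rfl | hj3 : j = 1 ∨ j = 2 ∨ 3 ≤ j := by omega
  · have hq0 : q ≠ 0 := by rintro rfl; omega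
    rw [if_pos (by omega), if_neg (by omega), zero_mul, zero_mul,
      closedForm_of_pos (by omega) hj hjl hm,
      closedForm_of_dvd (q := q) (by omega) hq (by rw [hm]; ring)]
    linear_combination (norm := ring_nf) qint_add_one hr (l * q)
  · have hq0 : q ≠ 0 := by rintro rfl; omega
    rw [if_neg (by omega), if_pos (by omega), if_neg (by omega), zero_mul,
      closedForm_of_pos (by omega) hj hjl hm,
      closedForm_of_pos (q := q) (j := 1) (by omega) (by omega) (by omega) (by rw [hm]; ring),
      closedForm_of_dvd (q := q) (by omega) hq (by rw [hm]; ring)]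
    linear_combination (norm := ring_nf) qint_add_one hr (l * q + 1) + qint_add_one hr (l * q - 1)
  · rw [if_neg (by omega), if_neg (by omega), if_neg (by omega), zero_mul, one_mul]
    obtain rfl | hq0 : q = 0 ∨ 0 < q := by omega
    · rw [closedForm_of_lt hj.le hjl (by rw [hm]; ring),
        closedForm_of_lt (j := j - 1) (by omega) (by omega) (by rw [hm]; ring),
        closedForm_of_lt (j := j - 2) (by omega) (by omega) (by rw [hm]; ring)]
      linear_combination (norm := ring_nf) qint_add_one hr (j - 1)
    · rw [closedForm_of_pos hq0 hj hjl hm,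
        closedForm_of_pos (q := q) (j := j - 1) hq0 (by omega) (by omega) (by rw [hm]; ring),
        closedForm_of_pos (q := q) (j := j - 2) hq0 (by omega) (by omega) (by rw [hm]; ring)]
      linear_combination (norm := ring_nf)
        qint_add_one hr (l * q + j - 1) + qint_add_one hr (l * q - j + 1)

lemma closedForm_recurrence (hl : 3 ≤ l) (hr : r ≠ 0) :
    Recurrence l (r + r⁻¹) 1 1 (closedForm r l) := by
  intro m hm
  obtain ⟨q, j, hmqj, hq, hj, hjl⟩ :
      ∃ q j : ℤ, m = l * q + j - 1 ∧ 0 ≤ q ∧ 0 ≤ j ∧ j < l :=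
    ⟨(m + 1) / l, (m + 1) % l, by rw [Int.mul_ediv_add_emod]; ring,
      Int.ediv_nonneg (by omega) (by omega), Int.emod_nonneg _ (by omega),
      Int.emod_lt_of_pos _ (by omega)⟩
  obtain rfl | hj0 := hj.eq_or_lt
  · have hq0 : q ≠ 0 := by rintro rfl; omega
    exact closedForm_recurrenceAt_of_dvd hl hr (q := q) (by omega) (by rw [hmqj]; ring)
  · exact closedForm_recurrenceAt_of_not_dvd hl hr hq hj0 hjl hmqj hm

lemma closedForm_of_not_dvd {m : ℤ} (hl : 0 < l) (hlm : l ≤ m + 1) (hm : (m + 1) % l ≠ 0) :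
    closedForm r l m = qint r (m + 1) + qint r (m + 1 - 2 * ((m + 1) % l)) := by
  have hq : 1 ≤ (m + 1) / l := (Int.le_ediv_iff_mul_le (by omega)).2 (by simpa using hlm)
  rw [closedForm, if_neg (by omega), if_neg (by omega)]

lemma closedForm_zero (hl : 1 < l) : closedForm r l 0 = qint r 1 :=
  closedForm_of_lt zero_le_one (by omega) (by norm_num)

lemma closedForm_one (hl : 2 < l) : closedForm r l 1 = qint r 2 :=
  closedForm_of_lt zero_le_two (by omega) (by norm_num)

end ClosedForm

/-- For `l ≥ 3` and `γ = (r + r⁻¹)⁻²`, for every non-critical `n ≥ l` with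
`j = (n+1) mod l` one has `λ_n = ([n+1]_r + [n+1-2j]_r)/(r + r⁻¹)^n`. -/
theorem stmt_18 (l : ℕ) (hl : 3 ≤ l)
    (r : ℂ) (hr0 : r ≠ 0) (hr2 : r ^ 2 ≠ 1) (hrr : r + r⁻¹ ≠ 0)
    (γ : ℂ) (hγ : γ = ((r + r⁻¹) ^ 2)⁻¹)
    (lam : ℤ → ℂ)
    (hlneg : ∀ m : ℤ, m < 0 → lam m = 0)
    (hl0 : lam 0 = 1) (hl1 : lam 1 = 1)
    (hrec0 : ∀ m : ℕ, 2 ≤ m → m % l = 0 → lam (m : ℤ) = lam ((m : ℤ) - 1))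
    (hrec1 : ∀ m : ℕ, 2 ≤ m → m % l = 1 →
      lam (m : ℤ) = lam ((m : ℤ) - 1) - 2 * γ * lam ((m : ℤ) - 2))
    (hrecl : ∀ m : ℕ, 2 ≤ m → m % l = l - 1 →
      lam (m : ℤ) = lam ((m : ℤ) - 1) - γ * lam ((m : ℤ) - 2) - γ ^ l * lam ((m : ℤ) - 2 * l))
    (hrece : ∀ m : ℕ, 2 ≤ m → m % l ≠ 0 → m % l ≠ 1 → m % l ≠ l - 1 →
      lam (m : ℤ) = lam ((m : ℤ) - 1) - γ * lam ((m : ℤ) - 2)) :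
    ∀ n : ℕ, l ≤ n → (n + 1) % l ≠ 0 →
      lam (n : ℤ) =
        ((r ^ ((n : ℤ) + 1) - r ^ (-((n : ℤ) + 1))) / (r - r⁻¹) +
          (r ^ ((n : ℤ) + 1 - 2 * (((n + 1) % l : ℕ) : ℤ)) -
            r ^ (-((n : ℤ) + 1 - 2 * (((n + 1) % l : ℕ) : ℤ)))) / (r - r⁻¹)) /
        (r + r⁻¹) ^ n := by
  have hrd : r - r⁻¹ ≠ 0 := by
    intro h
    apply hr2
    field_simp at h
    linear_combination h
  have hscaled : (fun m : ℤ ↦ (r + r⁻¹) ^ m * lam m) = closedForm r l :=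
    ((recurrence_of_cases hl hrec0 hrec1 hrecl hrece).scale hrr hγ).unique (by omega)
      (closedForm_recurrence hl hr0) (fun m hm ↦ by simp [hlneg m hm])
      (fun m hm ↦ closedForm_of_neg hm)
      (by simp [hl0, closedForm_zero (l := l) (by omega), qint_one hrd])
      (by simp [hl1, closedForm_one (l := l) (by omega), qint_two hr0 hrd])
  intro n hn hnc
  have h := congrFun hscaled n
  rw [closedForm_of_not_dvd (by omega) (by omega) (by exact_mod_cast hnc), zpow_natCast] at h
  rw [eq_div_iff (pow_ne_zero n hrr), mul_comm, h, qint, qint]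
  push_cast
  ring
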